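/- arXiv:2007.01753 — 5 statements merged into one kernel-verified Lean document; each statement's English description precedes it below -/
import Mathlib

section
/- Let p, q, q' be points of three-dimensional Euclidean space (EuclideanSpace ℝ (Fin 3)) and set ℓ = dist p q. Suppose ε and θ are real numbers with ε > 0 and 0 < θ < π/2 such that ℓ − ε ≤ dist p q' ≤ ℓ + ε and the angle ∠ q p q' is at most θ. Then dist q q' ≤ 2·ℓ·sin(θ/2) + ε. -/
/-- Lemma 2 of the paper: the single-segment perturbation bound. -/
theorem single_segment_perturbation
    (p q q' : EuclideanSpace ℝ (Fin 3)) (ℓ ε θ : ℝ)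
    (hℓ : ℓ = dist p q)
    (hε : 0 < ε) (hθ₀ : 0 < θ) (hθ₁ : θ < Real.pi / 2)
    (hlow : ℓ - ε ≤ dist p q') (hhigh : dist p q' ≤ ℓ + ε)
    (hangle : EuclideanGeometry.angle q p q' ≤ θ) :
    dist q q' ≤ 2 * ℓ * Real.sin (θ / 2) + ε := by
  have hπ := Real.pi_pos
  set α := EuclideanGeometry.angle q p q' with hα
  set r := dist p q' with hr
  have hlc := EuclideanGeometry.law_cos q p q'
  rw [dist_comm q p, dist_comm q' p, ← hℓ, ← hr, ← hα] at hlc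
  have hℓ0 : 0 ≤ ℓ := hℓ ▸ dist_nonneg
  have hr0 : 0 ≤ r := dist_nonneg
  have hα0 : 0 ≤ α := EuclideanGeometry.angle_nonneg _ _ _
  have hθπ : θ ≤ Real.pi := le_of_lt (lt_trans hθ₁ (by linarith))
  have hcos : Real.cos θ ≤ Real.cos α :=
    Real.cos_le_cos_of_nonneg_of_le_pi hα0 hθπ hangle
  have hsinpos : 0 < Real.sin (θ / 2) :=
    Real.sin_pos_of_pos_of_lt_pi (by linarith) (by linarith)
  have hsin1 : Real.sin (θ / 2) ≤ 1 := Real.sin_le_one _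
  have hc2 : Real.cos θ = 1 - 2 * Real.sin (θ / 2) ^ 2 := by
    have h := Real.cos_two_mul (θ / 2)
    have h2 := Real.sin_sq_add_cos_sq (θ / 2)
    have hθ2 : 2 * (θ / 2) = θ := by ring
    rw [hθ2] at h
    linarith
  set s := Real.sin (θ / 2) with hs
  have hsq : dist q q' * dist q q' ≤ (2 * ℓ * s + ε) * (2 * ℓ * s + ε) := by
    have hc1 : Real.cos α ≤ 1 := Real.cos_le_one α
    have h1 : (ℓ - r) ^ 2 ≤ ε ^ 2 := by nlinarith
    have h2 : ℓ * s ^ 2 * (r - ℓ) ≤ ℓ * s * ε := by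
      have : ℓ * s ^ 2 * (r - ℓ) ≤ ℓ * s ^ 2 * ε :=
        mul_le_mul_of_nonneg_left (by linarith) (by positivity)
      have : ℓ * s ^ 2 * ε ≤ ℓ * s * ε := by
        nlinarith [mul_nonneg (mul_nonneg (mul_nonneg hℓ0 hsinpos.le) hε.le)
          (by linarith : (0:ℝ) ≤ 1 - s)]
      linarith
    have h3 : ℓ * r * Real.cos θ ≤ ℓ * r * Real.cos α :=
      mul_le_mul_of_nonneg_left hcos (mul_nonneg hℓ0 hr0)
    nlinarith [mul_nonneg (mul_nonneg hℓ0 hsinpos.le) hε.le]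
  have hrhs : 0 ≤ 2 * ℓ * s + ε := by positivity
  nlinarith [dist_nonneg (x := q) (y := q')]
end

section
/- Work in the Euclidean plane ℝ². Fix real numbers a < b and radii r₁, r₂ > 0 with b − a > r₁ + r₂, and let D₁ and D₂ be the closed disks of radius r₁ and r₂ centered at c₁ = (a,0) and c₂ = (b,0) respectively. Let T be the common internal tangent of D₁ and D₂ that is above D₁ and below D₂, given as the graph of an affine function t. Let u = (x_u, y_u) be a point with x_u > b, y_u < 0, and y_u < t(x_u) (i.e., u lies strictly below T). Then there is no line in ℝ² that intersects D₁, intersects D₂, and passes through u. -/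
/-!
If a line through `u` meets both disks, the distances from `c₁` and `c₂` to it are at most `r₁`
and `r₂`; as `c₂ - c₁ = (b - a, 0)`, the signed distances differ by `(b - a) sin θ` (θ the angle
of the line with the axis), so `(b - a) |sin θ| ≤ r₁ + r₂`. The tangency conditions
give `(r₁ + r₂) √(1 + m²) ≤ -m (b - a)`, so the line is no steeper than `T`. Followed leftwards
from `u`, which lies below `T`, such a line stays below `T`, so at `x = b` it passes below `c₂`
by more than the vertical gap `r₂ √(1 + m²)` between `c₂` and `T`: it misses `D₂`.
-/

open Metric

local notation "ℝ²" => EuclideanSpace ℝ (Fin 2)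

def cross (v w : ℝ²) : ℝ := v 0 * w 1 - v 1 * w 0

lemma norm_sq_eq_fin_two (v : ℝ²) : ‖v‖ ^ 2 = v 0 ^ 2 + v 1 ^ 2 := by
  rw [EuclideanSpace.real_norm_sq_eq, Fin.sum_univ_two]

lemma abs_cross_le (v w : ℝ²) : |cross v w| ≤ ‖v‖ * ‖w‖ := by
  have lagrange : cross v w ^ 2 + (v 0 * w 0 + v 1 * w 1) ^ 2 = (‖v‖ * ‖w‖) ^ 2 := by
    rw [mul_pow, norm_sq_eq_fin_two, norm_sq_eq_fin_two, cross]
    ring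
  exact abs_le_of_sq_le_sq (by nlinarith) (by positivity)

/-- `|cross (c - u) d| / ‖d‖` is the distance from `c` to the line through `u` with direction `d`. -/
lemma abs_cross_le_of_line_meets_closedBall {p d c u : ℝ²} {r t s : ℝ}
    (hq : p + t • d ∈ closedBall c r) (hu : p + s • d = u) : |cross (c - u) d| ≤ r * ‖d‖ := by
  have hshift : cross (c - u) d = cross (c - (p + t • d)) d := by
    simp only [cross, ← hu, PiLp.sub_apply, PiLp.add_apply, PiLp.smul_apply, smul_eq_mul]
    ring
  rw [hshift, mem_closedBall, dist_comm, dist_eq_norm] at *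
  exact (abs_cross_le _ _).trans (by gcongr)

lemma abs_cross_sub_le_of_line_meets_closedBalls {p d c₁ c₂ : ℝ²} {r₁ r₂ t₁ t₂ : ℝ}
    (hq₁ : p + t₁ • d ∈ closedBall c₁ r₁) (hq₂ : p + t₂ • d ∈ closedBall c₂ r₂) :
    |cross (c₁ - c₂) d| ≤ (r₁ + r₂) * ‖d‖ := by
  have hp : p + (0 : ℝ) • d = p := by rw [zero_smul, add_zero]
  have hsplit : cross (c₁ - c₂) d = cross (c₁ - p) d - cross (c₂ - p) d := by
    simp only [cross, PiLp.sub_apply]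
    ring
  rw [hsplit, add_mul]
  exact (abs_sub _ _).trans (add_le_add (abs_cross_le_of_line_meets_closedBall hq₁ hp)
    (abs_cross_le_of_line_meets_closedBall hq₂ hp))

lemma infDist_graph_mul_sqrt_le (m k : ℝ) (P : ℝ²) :
    infDist P {Q : ℝ² | Q 1 = m * Q 0 + k} * √(1 + m ^ 2) ≤ |m * P 0 + k - P 1| := by
  set e := m * P 0 + k - P 1
  have hm : 0 < 1 + m ^ 2 := by positivity
  have hfoot : P + (e / (1 + m ^ 2)) • !₂[-m, 1] ∈ {Q : ℝ² | Q 1 = m * Q 0 + k} := by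
    simp only [Set.mem_ofPred_eq, PiLp.add_apply, PiLp.smul_apply, Matrix.cons_val_zero,
      Matrix.cons_val_one, Matrix.cons_val_fin_one, smul_eq_mul, mul_one, mul_neg]
    field_simp
    ring
  have hdist : dist P (P + (e / (1 + m ^ 2)) • !₂[-m, 1]) = |e| / (1 + m ^ 2) * √(1 + m ^ 2) := by
    rw [dist_comm, dist_eq_norm, add_sub_cancel_left, norm_smul, Real.norm_eq_abs, abs_div,
      abs_of_pos hm]
    congr 1
    simp only [EuclideanSpace.norm_eq, Real.norm_eq_abs, sq_abs, Fin.sum_univ_two,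
      Matrix.cons_val_zero, Matrix.cons_val_one, Matrix.cons_val_fin_one, even_two, Even.neg_pow,
      one_pow]
    ring_nf
  calc infDist P {Q : ℝ² | Q 1 = m * Q 0 + k} * √(1 + m ^ 2)
      ≤ |e| / (1 + m ^ 2) * √(1 + m ^ 2) * √(1 + m ^ 2) := by
        gcongr
        exact hdist ▸ infDist_le_dist_of_mem hfoot
    _ = |e| := by
        rw [mul_assoc, Real.mul_self_sqrt hm.le]
        field_simp

lemma sq_le_of_abs_mul_le {d : ℝ²} {B R m : ℝ} (hB : 0 < B) (hgap : B * |d 1| ≤ R * ‖d‖)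
    (htan : R * √(1 + m ^ 2) ≤ -m * B) : d 1 ^ 2 ≤ m ^ 2 * d 0 ^ 2 := by
  have hs : 0 ≤ √(1 + m ^ 2) := Real.sqrt_nonneg _
  have h : |d 1| * √(1 + m ^ 2) ≤ -m * ‖d‖ := by
    refine le_of_mul_le_mul_left ?_ hB
    calc B * (|d 1| * √(1 + m ^ 2)) ≤ R * √(1 + m ^ 2) * ‖d‖ := by
          nlinarith [mul_le_mul_of_nonneg_right hgap hs]
      _ ≤ -m * B * ‖d‖ := by gcongr
      _ = B * (-m * ‖d‖) := by ring
  have hsq := pow_le_pow_left₀ (by positivity) h 2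
  rw [mul_pow, mul_pow, sq_abs, Real.sq_sqrt (by positivity), norm_sq_eq_fin_two] at hsq
  nlinarith

lemma lt_abs_cross_of_below_tangent {c u d : ℝ²} {m k r : ℝ} (hd : d ≠ 0) (hm : m ≤ 0)
    (hr : 0 ≤ r) (hslope : d 1 ^ 2 ≤ m ^ 2 * d 0 ^ 2) (hux : c 0 < u 0)
    (huT : u 1 < m * u 0 + k) (htan : r * √(1 + m ^ 2) ≤ c 1 - (m * c 0 + k)) :
    r * ‖d‖ < |cross (c - u) d| := by
  have hdx : d 0 ≠ 0 := by
    intro h0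
    refine hd (PiLp.ext fun i => ?_)
    fin_cases i
    · exact h0
    · simpa [h0] using hslope
  have hnorm : ‖d‖ ≤ √(1 + m ^ 2) * |d 0| := by
    refine le_of_sq_le_sq ?_ (by positivity)
    rw [mul_pow, Real.sq_sqrt (by positivity), sq_abs, norm_sq_eq_fin_two]
    linarith
  have hmixed : m * d 0 ^ 2 ≤ d 0 * d 1 := by
    by_contra! h
    have hQ : m * d 0 ^ 2 ≤ 0 := mul_nonpos_of_nonpos_of_nonneg hm (sq_nonneg _)
    nlinarith [mul_le_mul_of_nonneg_left hslope (sq_nonneg (d 0)),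
      mul_pos_of_neg_of_neg (sub_neg.mpr h) (by linarith : d 0 * d 1 + m * d 0 ^ 2 < 0)]
  have hcross : r * √(1 + m ^ 2) * d 0 ^ 2 < -(d 0 * cross (c - u) d) := by
    have hd0 : 0 < d 0 ^ 2 := by positivity
    simp only [cross, PiLp.sub_apply]
    nlinarith [mul_le_mul_of_nonneg_right htan hd0.le, mul_lt_mul_of_pos_right huT hd0,
      mul_le_mul_of_nonpos_left hmixed (sub_nonpos.mpr hux.le)]
  have hd0 : 0 < |d 0| := abs_pos.mpr hdx
  calc r * ‖d‖ ≤ r * √(1 + m ^ 2) * |d 0| := by rw [mul_assoc]; gcongr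
    _ < |cross (c - u) d| := by
      refine lt_of_mul_lt_mul_right ?_ hd0.le
      calc r * √(1 + m ^ 2) * |d 0| * |d 0| = r * √(1 + m ^ 2) * d 0 ^ 2 := by
            rw [mul_assoc, ← sq, sq_abs]
        _ < -(d 0 * cross (c - u) d) := hcross
        _ ≤ |cross (c - u) d| * |d 0| := by rw [mul_comm, ← abs_mul]; exact neg_le_abs _

theorem no_line_through_disks_and_point_below_tangent_general
    (a b r₁ r₂ m k : ℝ) (hab : a < b) (hr₂ : 0 < r₂)
    (c₁ c₂ u : EuclideanSpace ℝ (Fin 2))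
    (hc₁ : c₁ = (WithLp.equiv 2 (Fin 2 → ℝ)).symm ![a, 0])
    (hc₂ : c₂ = (WithLp.equiv 2 (Fin 2 → ℝ)).symm ![b, 0])
    (T : Set (EuclideanSpace ℝ (Fin 2)))
    (hT : T = {P : EuclideanSpace ℝ (Fin 2) | P 1 = m * P 0 + k})
    (htan₁ : Metric.infDist c₁ T = r₁)
    (htan₂ : Metric.infDist c₂ T = r₂)
    (hbelow : c₁ 1 < m * c₁ 0 + k)
    (habove : m * c₂ 0 + k < c₂ 1)
    (hux : b < u 0)
    (huT : u 1 < m * u 0 + k) :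
    ¬ ∃ (p d : EuclideanSpace ℝ (Fin 2)) (t₁ t₂ t₃ : ℝ), d ≠ 0 ∧
        p + t₁ • d ∈ Metric.closedBall c₁ r₁ ∧
        p + t₂ • d ∈ Metric.closedBall c₂ r₂ ∧
        p + t₃ • d = u := by
  rintro ⟨p, d, t₁, t₂, t₃, hd, hq₁, hq₂, hu⟩
  have hc₁0 : c₁ 0 = a := by simp [hc₁]
  have hc₁1 : c₁ 1 = 0 := by simp [hc₁]
  have hc₂0 : c₂ 0 = b := by simp [hc₂]
  have hc₂1 : c₂ 1 = 0 := by simp [hc₂]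
  rw [hc₁0, hc₁1] at hbelow
  rw [hc₂0, hc₂1] at habove
  have hm : m < 0 := by nlinarith
  have htan₁' : r₁ * √(1 + m ^ 2) ≤ m * a + k := by
    simpa [← hT, htan₁, hc₁0, hc₁1, abs_of_pos hbelow] using infDist_graph_mul_sqrt_le m k c₁
  have htan₂' : r₂ * √(1 + m ^ 2) ≤ -(m * b + k) := by
    simpa [← hT, htan₂, hc₂0, hc₂1, abs_of_neg habove] using infDist_graph_mul_sqrt_le m k c₂
  have hgap : (b - a) * |d 1| ≤ (r₁ + r₂) * ‖d‖ := by
    have hcross : cross (c₁ - c₂) d = -((b - a) * d 1) := by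
      simp only [cross, PiLp.sub_apply, hc₁0, hc₁1, hc₂0, hc₂1]
      ring
    simpa [hcross, abs_mul, abs_of_pos (sub_pos.mpr hab)] using
      abs_cross_sub_le_of_line_meets_closedBalls hq₁ hq₂
  have hslope := sq_le_of_abs_mul_le (m := m) (sub_pos.mpr hab) hgap (by linarith)
  exact (lt_abs_cross_of_below_tangent hd hm.le hr₂.le hslope (by rwa [hc₂0]) huT
    (by rwa [hc₂0, hc₂1, zero_sub])).not_ge (abs_cross_le_of_line_meets_closedBall hq₂ hu)

/-- Lemma 1 of the paper: if `u` lies strictly below the common internal tangent `T`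
of the two disks (the tangent that is above `D₁` and below `D₂`), to the right of `D₂`
and below the `x`-axis, then no line passes through both disks and `u`. -/
theorem no_line_through_disks_and_point_below_tangent
    (a b r₁ r₂ m k : ℝ) (hab : a < b) (hr₁ : 0 < r₁) (hr₂ : 0 < r₂)
    (hsep : r₁ + r₂ < b - a)
    (c₁ c₂ u : EuclideanSpace ℝ (Fin 2))
    (hc₁ : c₁ = (WithLp.equiv 2 (Fin 2 → ℝ)).symm ![a, 0])
    (hc₂ : c₂ = (WithLp.equiv 2 (Fin 2 → ℝ)).symm ![b, 0])
    (T : Set (EuclideanSpace ℝ (Fin 2)))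
    (hT : T = {P : EuclideanSpace ℝ (Fin 2) | P 1 = m * P 0 + k})
    (htan₁ : Metric.infDist c₁ T = r₁)
    (htan₂ : Metric.infDist c₂ T = r₂)
    (hbelow : c₁ 1 < m * c₁ 0 + k)
    (habove : m * c₂ 0 + k < c₂ 1)
    (hux : b < u 0) (huy : u 1 < 0)
    (huT : u 1 < m * u 0 + k) :
    ¬ ∃ (p d : EuclideanSpace ℝ (Fin 2)) (t₁ t₂ t₃ : ℝ), d ≠ 0 ∧
        p + t₁ • d ∈ Metric.closedBall c₁ r₁ ∧
        p + t₂ • d ∈ Metric.closedBall c₂ r₂ ∧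
        p + t₃ • d = u :=
  no_line_through_disks_and_point_below_tangent_general a b r₁ r₂ m k hab hr₂ c₁ c₂ u hc₁ hc₂ T hT
    htan₁ htan₂ hbelow habove hux huT
end

section
/- Work in the Euclidean plane ℝ². Fix real numbers a < b and radii r₁, r₂ > 0 with b − a > r₁ + r₂, and let D₁ and D₂ be the closed disks of radius r₁ and r₂ centered at c₁ = (a,0) and c₂ = (b,0) respectively. Let T be the common internal tangent of D₁ and D₂ that is above D₁ and below D₂, given as the graph of an affine function t. Then every line L that intersects both D₁ and D₂ lies on or above T to the right of D₂: for every point (x, y) ∈ L with x > b one has y ≥ t(x). -/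
/-!
Write the line through both disks as the graph of `ℓ x = σ * x + κ`; it is not vertical because
the disks are horizontally separated. By Cauchy–Schwarz, a line of slope `σ` meeting the disk of
radius `r` about `(c, 0)` satisfies `|ℓ c| ≤ r * √(1 + σ ^ 2)`, with equality for a tangent. Hence
`|σ| * (b - a) ≤ (r₁ + r₂) * √(1 + σ ^ 2)` while `|m| * (b - a) = (r₁ + r₂) * √(1 + m ^ 2)`, so
`|σ| ≤ |m| = -m`. This gives both `m ≤ σ` and `ℓ b ≥ -r₂ * √(1 + σ ^ 2) ≥ -r₂ * √(1 + m ^ 2) = t b`,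
so `ℓ - t` is nonnegative at `b` and nondecreasing.
-/

open Real Metric

def graphLine (m k : ℝ) : Set (EuclideanSpace ℝ (Fin 2)) :=
  {P | P 1 = m * P 0 + k}

lemma abs_sub_sub_mul_le_sqrt_mul_dist (σ : ℝ) (P c : EuclideanSpace ℝ (Fin 2)) :
    |(P 1 - c 1) - σ * (P 0 - c 0)| ≤ √(1 + σ ^ 2) * dist P c := by
  rw [EuclideanSpace.dist_eq, Fin.sum_univ_two, Real.dist_eq, Real.dist_eq, sq_abs, sq_abs,
    ← Real.sqrt_mul (by positivity)]
  exact Real.abs_le_sqrt (by nlinarith [sq_nonneg (σ * (P 1 - c 1) + (P 0 - c 0))])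

lemma infDist_graphLine (m k : ℝ) (c : EuclideanSpace ℝ (Fin 2)) :
    infDist c (graphLine m k) = |c 1 - (m * c 0 + k)| / √(1 + m ^ 2) := by
  have hN : 0 < √(1 + m ^ 2) := Real.sqrt_pos.2 (by positivity)
  have hN2 : √(1 + m ^ 2) ^ 2 = 1 + m ^ 2 := Real.sq_sqrt (by positivity)
  set f := c 1 - (m * c 0 + k)
  -- the foot of the perpendicular from `c`
  let q : EuclideanSpace ℝ (Fin 2) := c + (f / (1 + m ^ 2)) • !₂[m, -1]
  have hq : q ∈ graphLine m k := by
    show c 1 + f / (1 + m ^ 2) * -1 = m * (c 0 + f / (1 + m ^ 2) * m) + k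
    field_simp
    ring
  refine le_antisymm ((infDist_le_dist_of_mem hq).trans_eq ?_) ((le_infDist ⟨q, hq⟩).2 ?_)
  · rw [dist_self_add_right, norm_smul, EuclideanSpace.norm_eq, Fin.sum_univ_two]
    simp only [norm_div, norm_eq_abs, sq_abs, Matrix.cons_val_zero, Matrix.cons_val_one,
      Matrix.cons_val_fin_one, norm_neg, norm_one, one_pow]
    rw [add_comm (m ^ 2), abs_of_pos (by positivity : (0:ℝ) < 1 + m ^ 2)]
    nth_rw 1 [← hN2]
    field_simp
  · intro P hP
    rw [div_le_iff₀' hN]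
    have hf : f = (c 1 - P 1) - m * (c 0 - P 0) := by rw [show P 1 = _ from hP]; ring
    exact hf ▸ abs_sub_sub_mul_le_sqrt_mul_dist m c P

lemma abs_sub_eq_of_infDist_graphLine {m k r : ℝ} {c : EuclideanSpace ℝ (Fin 2)}
    (h : infDist c (graphLine m k) = r) : |c 1 - (m * c 0 + k)| = r * √(1 + m ^ 2) := by
  rwa [infDist_graphLine, div_eq_iff (Real.sqrt_pos.2 (by positivity)).ne'] at h

lemma abs_sub_le_of_mem_graphLine_of_mem_closedBall {σ κ r : ℝ} {P c : EuclideanSpace ℝ (Fin 2)}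
    (hP : P ∈ graphLine σ κ) (hPc : P ∈ closedBall c r) :
    |c 1 - (σ * c 0 + κ)| ≤ r * √(1 + σ ^ 2) := by
  have hf : c 1 - (σ * c 0 + κ) = (c 1 - P 1) - σ * (c 0 - P 0) := by
    rw [show P 1 = _ from hP]; ring
  rw [hf, mul_comm r]
  exact (abs_sub_sub_mul_le_sqrt_mul_dist σ c P).trans
    (mul_le_mul_of_nonneg_left (dist_comm c P ▸ hPc) (Real.sqrt_nonneg _))

lemma coord_lt_of_mem_closedBall {ι : Type*} [Fintype ι] {P Q c c' : EuclideanSpace ℝ ι}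
    {r r' : ℝ} (i : ι)
    (hP : P ∈ closedBall c r) (hQ : Q ∈ closedBall c' r') (h : c i + r < c' i - r') :
    P i < Q i := by
  have hP' := abs_le.1 ((Real.dist_eq _ _).symm.trans_le ((PiLp.dist_apply_le P c i).trans hP))
  have hQ' := abs_le.1 ((Real.dist_eq _ _).symm.trans_le ((PiLp.dist_apply_le Q c' i).trans hQ))
  linarith [hP'.2, hQ'.1]

lemma add_smul_mem_graphLine {p d : EuclideanSpace ℝ (Fin 2)} (hd : d 0 ≠ 0) (s : ℝ) :
    p + s • d ∈ graphLine (d 1 / d 0) (p 1 - d 1 / d 0 * p 0) := by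
  show p 1 + s * d 1 = d 1 / d 0 * (p 0 + s * d 0) + (p 1 - d 1 / d 0 * p 0)
  field_simp
  ring

lemma mul_add_le_mul_add_of_abs_le {a b r₁ r₂ m k σ κ : ℝ} (hr₁ : 0 ≤ r₁) (hr₂ : 0 ≤ r₂)
    (hsep : r₁ + r₂ < b - a)
    (ht₁ : m * a + k = r₁ * √(1 + m ^ 2)) (ht₂ : m * b + k = -(r₂ * √(1 + m ^ 2)))
    (hℓ₁ : |σ * a + κ| ≤ r₁ * √(1 + σ ^ 2)) (hℓ₂ : |σ * b + κ| ≤ r₂ * √(1 + σ ^ 2))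
    {x : ℝ} (hx : b ≤ x) : m * x + k ≤ σ * x + κ := by
  have hba : 0 < b - a := by linarith
  have hm : m * (b - a) = -((r₁ + r₂) * √(1 + m ^ 2)) := by linear_combination ht₂ - ht₁
  have hσ : |σ| * (b - a) ≤ (r₁ + r₂) * √(1 + σ ^ 2) :=
    calc |σ| * (b - a) = |(σ * b + κ) - (σ * a + κ)| := by
          rw [← abs_of_pos hba, ← abs_mul]; congr 1; ring
      _ ≤ |σ * b + κ| + |σ * a + κ| := abs_sub _ _
      _ ≤ (r₁ + r₂) * √(1 + σ ^ 2) := by linarith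
  -- `s ↦ s ^ 2 / (1 + s ^ 2)` is increasing in `s ^ 2`
  have hσm : σ ^ 2 ≤ m ^ 2 := by
    have h₁ := pow_le_pow_left₀ (by positivity) hσ 2
    have h₂ := congrArg (· ^ 2) hm
    simp only [mul_pow, sq_abs, neg_sq, Real.sq_sqrt (by positivity : (0:ℝ) ≤ 1 + σ ^ 2),
      Real.sq_sqrt (by positivity : (0:ℝ) ≤ 1 + m ^ 2)] at h₁ h₂
    nlinarith [pow_lt_pow_left₀ hsep (by positivity) two_ne_zero]
  have hm_nonpos : m ≤ 0 := by nlinarith [Real.sqrt_nonneg (1 + m ^ 2)]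
  have hmσ : m ≤ σ := by
    have := sq_le_sq.1 hσm
    rw [abs_of_nonpos hm_nonpos] at this
    linarith [neg_abs_le σ]
  have hb : m * b + k ≤ σ * b + κ := by
    have hS : √(1 + σ ^ 2) ≤ √(1 + m ^ 2) := Real.sqrt_le_sqrt (by linarith)
    nlinarith [neg_abs_le (σ * b + κ)]
  nlinarith

theorem line_through_disks_above_tangent_general
    (a b r₁ r₂ m k : ℝ) (hr₁ : 0 < r₁) (hr₂ : 0 < r₂)
    (hsep : r₁ + r₂ < b - a)
    (c₁ c₂ : EuclideanSpace ℝ (Fin 2))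
    (hc₁ : c₁ = (WithLp.equiv 2 (Fin 2 → ℝ)).symm ![a, 0])
    (hc₂ : c₂ = (WithLp.equiv 2 (Fin 2 → ℝ)).symm ![b, 0])
    (T : Set (EuclideanSpace ℝ (Fin 2)))
    (hT : T = {P : EuclideanSpace ℝ (Fin 2) | P 1 = m * P 0 + k})
    (htan₁ : Metric.infDist c₁ T = r₁)
    (htan₂ : Metric.infDist c₂ T = r₂)
    (hbelow : c₁ 1 < m * c₁ 0 + k)
    (habove : m * c₂ 0 + k < c₂ 1) :
    ∀ (p d : EuclideanSpace ℝ (Fin 2)) (t₁ t₂ : ℝ), d ≠ 0 →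
      p + t₁ • d ∈ Metric.closedBall c₁ r₁ →
      p + t₂ • d ∈ Metric.closedBall c₂ r₂ →
      ∀ s : ℝ, b < (p + s • d) 0 →
        m * (p + s • d) 0 + k ≤ (p + s • d) 1 := by
  intro p d t₁ t₂ _ hq₁ hq₂ s hs
  obtain ⟨hc₁0, hc₁1⟩ : c₁ 0 = a ∧ c₁ 1 = 0 := by subst hc₁; exact ⟨rfl, rfl⟩
  obtain ⟨hc₂0, hc₂1⟩ : c₂ 0 = b ∧ c₂ 1 = 0 := by subst hc₂; exact ⟨rfl, rfl⟩
  subst hT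
  have ht₁ := abs_sub_eq_of_infDist_graphLine htan₁
  have ht₂ := abs_sub_eq_of_infDist_graphLine htan₂
  rw [hc₁0, hc₁1] at ht₁ hbelow
  rw [hc₂0, hc₂1] at ht₂ habove
  rw [zero_sub, abs_neg, abs_of_pos hbelow] at ht₁
  rw [zero_sub, abs_neg, abs_of_neg habove, neg_eq_iff_eq_neg] at ht₂
  have hd : d 0 ≠ 0 := by
    intro h
    have := coord_lt_of_mem_closedBall 0 hq₁ hq₂ (by rw [hc₁0, hc₂0]; linarith)
    simp only [PiLp.add_apply, PiLp.smul_apply, h, smul_zero, lt_self_iff_false] at this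
  have hℓ₁ := abs_sub_le_of_mem_graphLine_of_mem_closedBall (add_smul_mem_graphLine hd t₁) hq₁
  have hℓ₂ := abs_sub_le_of_mem_graphLine_of_mem_closedBall (add_smul_mem_graphLine hd t₂) hq₂
  rw [hc₁0, hc₁1, zero_sub, abs_neg] at hℓ₁
  rw [hc₂0, hc₂1, zero_sub, abs_neg] at hℓ₂
  rw [add_smul_mem_graphLine hd s]
  exact mul_add_le_mul_add_of_abs_le hr₁.le hr₂.le hsep ht₁ ht₂ hℓ₁ hℓ₂ hs.le

/-- The key claim in the proof of Lemma 1 of the paper: any line passing through both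
disks lies on or above their common internal tangent to the right of the second disk. -/
theorem line_through_disks_above_tangent
    (a b r₁ r₂ m k : ℝ) (hab : a < b) (hr₁ : 0 < r₁) (hr₂ : 0 < r₂)
    (hsep : r₁ + r₂ < b - a)
    (c₁ c₂ : EuclideanSpace ℝ (Fin 2))
    (hc₁ : c₁ = (WithLp.equiv 2 (Fin 2 → ℝ)).symm ![a, 0])
    (hc₂ : c₂ = (WithLp.equiv 2 (Fin 2 → ℝ)).symm ![b, 0])
    (T : Set (EuclideanSpace ℝ (Fin 2)))
    (hT : T = {P : EuclideanSpace ℝ (Fin 2) | P 1 = m * P 0 + k})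
    (htan₁ : Metric.infDist c₁ T = r₁)
    (htan₂ : Metric.infDist c₂ T = r₂)
    (hbelow : c₁ 1 < m * c₁ 0 + k)
    (habove : m * c₂ 0 + k < c₂ 1) :
    ∀ (p d : EuclideanSpace ℝ (Fin 2)) (t₁ t₂ : ℝ), d ≠ 0 →
      p + t₁ • d ∈ Metric.closedBall c₁ r₁ →
      p + t₂ • d ∈ Metric.closedBall c₂ r₂ →
      ∀ s : ℝ, b < (p + s • d) 0 →
        m * (p + s • d) 0 + k ≤ (p + s • d) 1 :=
  line_through_disks_above_tangent_general a b r₁ r₂ m k hr₁ hr₂ hsep c₁ c₂ hc₁ hc₂ T hT htan₁ htan₂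
    hbelow habove
end

section
/- Let k be a natural number, let L, μ be nonnegative reals and θ a real with 0 < θ < π/2. Let q₀, q₁, …, q_k and q'₀, q'₁, …, q'_k be two sequences of points in three-dimensional Euclidean space (EuclideanSpace ℝ (Fin 3)) with q'₀ = q₀, and suppose that for every i < k: (1) dist(qᵢ, qᵢ₊₁) ≤ L; (2) |dist(q'ᵢ, q'ᵢ₊₁) − dist(qᵢ, qᵢ₊₁)| ≤ μ; and (3) the angle between the vectors qᵢ₊₁ − qᵢ and q'ᵢ₊₁ − q'ᵢ is at most θ. Then dist(q_k, q'_k) ≤ k·(2·L·sin(θ/2) + μ). -/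
open scoped RealInnerProductSpace
open InnerProductGeometry
lemma edge_perturbation_bound {E : Type*} [NormedAddCommGroup E] [InnerProductSpace ℝ E]
    (L μ θ : ℝ) (hL : 0 ≤ L) (hθ₀ : 0 < θ) (hθ₁ : θ < Real.pi / 2)
    (v w : E) (hv : ‖v‖ ≤ L) (hμ : |‖w‖ - ‖v‖| ≤ μ)
    (hang : angle v w ≤ θ) :
    ‖w - v‖ ≤ 2 * L * Real.sin (θ / 2) + μ := by
  have hpi := Real.pi_pos
  have hvne : v ≠ 0 := by
    rintro rfl
    rw [angle_zero_left] at hang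
    linarith
  have hwne : w ≠ 0 := by
    rintro rfl
    rw [angle_zero_right] at hang
    linarith
  have hvpos : (0:ℝ) < ‖v‖ := norm_pos_iff.mpr hvne
  have hwpos : (0:ℝ) < ‖w‖ := norm_pos_iff.mpr hwne
  set α := angle v w with hαdef
  have hα0 : 0 ≤ α := angle_nonneg v w
  have hαpi : α ≤ Real.pi := angle_le_pi v w
  set u : E := (‖v‖ / ‖w‖) • w with hu
  have hnu : ‖u‖ = ‖v‖ := by
    rw [hu, norm_smul, Real.norm_eq_abs, abs_of_nonneg (by positivity),
      div_mul_cancel₀ _ hwpos.ne']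
  have hinner : ⟪u, v⟫ = Real.cos α * ‖v‖ ^ 2 := by
    have hc := cos_angle_mul_norm_mul_norm v w
    rw [hu, real_inner_smul_left, real_inner_comm, ← hc]
    field_simp
    ring
  have hsin : 0 ≤ Real.sin (α / 2) :=
    Real.sin_nonneg_of_nonneg_of_le_pi (by linarith) (by linarith)
  have hsq : ‖u - v‖ ^ 2 = (2 * ‖v‖ * Real.sin (α / 2)) ^ 2 := by
    have hhalf := Real.sin_sq_eq_half_sub (α / 2)
    rw [mul_div_cancel₀ α (by norm_num : (2:ℝ) ≠ 0)] at hhalf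
    rw [norm_sub_sq_real, hnu, hinner]
    nlinarith [hhalf]
  have h1 : ‖u - v‖ = 2 * ‖v‖ * Real.sin (α / 2) := by
    have h1' : 0 ≤ ‖u - v‖ := norm_nonneg _
    have h2' : 0 ≤ 2 * ‖v‖ * Real.sin (α / 2) := by positivity
    nlinarith [hsq]
  have h2 : ‖w - u‖ = |‖w‖ - ‖v‖| := by
    have : w - u = ((‖w‖ - ‖v‖) / ‖w‖) • w := by
      rw [hu, sub_div, div_self hwpos.ne', sub_smul, one_smul]
    rw [this, norm_smul, Real.norm_eq_abs, abs_div, abs_of_nonneg hwpos.le,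
      div_mul_cancel₀ _ hwpos.ne']
  have hmono : Real.sin (α / 2) ≤ Real.sin (θ / 2) :=
    Real.sin_le_sin_of_le_of_le_pi_div_two (by linarith) (by linarith) (by linarith)
  have htri : ‖w - v‖ ≤ ‖w - u‖ + ‖u - v‖ := by
    have : w - v = (w - u) + (u - v) := by abel
    rw [this]; exact norm_add_le _ _
  have : 2 * ‖v‖ * Real.sin (α / 2) ≤ 2 * L * Real.sin (θ / 2) := by
    have hsθ : 0 ≤ Real.sin (θ / 2) :=
      Real.sin_nonneg_of_nonneg_of_le_pi (by linarith) (by linarith)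
    nlinarith
  rw [h2] at htri
  linarith [htri, h1 ▸ this]

/-- The polygonal-path perturbation bound underlying Theorem 1 of the paper:
if every edge of a path of `k` edges in `ℝ³` is rotated by at most `θ` and its
length changed by at most `μ`, the endpoint moves by at most `k·(2L·sin(θ/2) + μ)`. -/
theorem path_perturbation_bound
    (k : ℕ) (L μ θ : ℝ) (hL : 0 ≤ L) (hμ : 0 ≤ μ)
    (hθ₀ : 0 < θ) (hθ₁ : θ < Real.pi / 2)
    (q q' : ℕ → EuclideanSpace ℝ (Fin 3)) (h0 : q' 0 = q 0)
    (hlen : ∀ i < k, dist (q i) (q (i + 1)) ≤ L)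
    (hdisc : ∀ i < k, |dist (q' i) (q' (i + 1)) - dist (q i) (q (i + 1))| ≤ μ)
    (hang : ∀ i < k,
      InnerProductGeometry.angle (q (i + 1) - q i) (q' (i + 1) - q' i) ≤ θ) :
    dist (q k) (q' k) ≤ k * (2 * L * Real.sin (θ / 2) + μ) := by
  have main : ∀ n, n ≤ k → dist (q n) (q' n) ≤ n * (2 * L * Real.sin (θ / 2) + μ) := by
    intro n
    induction n with
    | zero => intro _; simp [h0]
    | succ m ih =>
      intro hmk
      have hm : m < k := hmk
      have ihm := ih (le_of_lt hm)
      have hedge : ‖(q' (m + 1) - q' m) - (q (m + 1) - q m)‖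
          ≤ 2 * L * Real.sin (θ / 2) + μ := by
        apply edge_perturbation_bound L μ θ hL hθ₀ hθ₁ _ _ _ _ (hang m hm)
        · rw [← dist_eq_norm_sub]
          rw [dist_comm]
          exact hlen m hm
        · rw [← dist_eq_norm_sub, ← dist_eq_norm_sub, dist_comm (q' (m+1)),
            dist_comm (q (m+1))]
          exact hdisc m hm
      have hkey : dist (q (m + 1)) (q' (m + 1)) ≤ dist (q m) (q' m) +
          ‖(q' (m + 1) - q' m) - (q (m + 1) - q m)‖ := by
        rw [dist_eq_norm]
        have : q (m + 1) - q' (m + 1) =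
            (q m - q' m) - ((q' (m + 1) - q' m) - (q (m + 1) - q m)) := by abel
        rw [this]
        calc _ ≤ ‖q m - q' m‖ + ‖(q' (m + 1) - q' m) - (q (m + 1) - q m)‖ :=
              norm_sub_le _ _
          _ = _ := by rw [← dist_eq_norm]
      push_cast
      calc dist (q (m + 1)) (q' (m + 1))
          ≤ dist (q m) (q' m) + ‖(q' (m + 1) - q' m) - (q (m + 1) - q m)‖ := hkey
        _ ≤ m * (2 * L * Real.sin (θ / 2) + μ) + (2 * L * Real.sin (θ / 2) + μ) := by
            exact add_le_add ihm hedge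
        _ = (m + 1) * (2 * L * Real.sin (θ / 2) + μ) := by ring
  exact main k le_rfl
end

section
/- Let k and E be natural numbers with k ≤ E, let L, μ be nonnegative reals and θ a real with 0 < θ < π/2. Let q₀, q₁, …, q_k and q'₀, q'₁, …, q'_k be two sequences of points in three-dimensional Euclidean space (EuclideanSpace ℝ (Fin 3)) with q'₀ = q₀, and suppose that for every i < k: (1) dist(qᵢ, qᵢ₊₁) ≤ L; (2) |dist(q'ᵢ, q'ᵢ₊₁) − dist(qᵢ, qᵢ₊₁)| ≤ μ; and (3) the angle between the vectors qᵢ₊₁ − qᵢ and q'ᵢ₊₁ − q'ᵢ is at most θ. Then dist(q_k, q'_k) ≤ E²·L·2·sin(θ/2) + E·μ. -/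
/-!
Both paths start at the same point, so the endpoint displacement is the sum of the edge
discrepancies `(qᵢ₊₁ - qᵢ) - (q'ᵢ₊₁ - q'ᵢ)`. By the law of cosines, written with the half
angle, `‖v - v'‖² = (‖v‖ - ‖v'‖)² + 4‖v‖‖v'‖ sin²(α/2)`, which bounds each edge discrepancy
by `‖v‖ · 2 sin(α/2) + |‖v'‖ - ‖v‖| ≤ L · 2 sin(θ/2) + μ`. Summing over at most `E` edges
gives `E (L · 2 sin(θ/2) + μ)`, which is at most the stated bound.
-/

open InnerProductGeometry Real

section Edge

variable {V : Type*} [NormedAddCommGroup V] [InnerProductSpace ℝ V]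

theorem norm_sub_sq_eq_sq_sub_norm_add_sin_sq_half_angle (v v' : V) :
    ‖v - v'‖ ^ 2 = (‖v‖ - ‖v'‖) ^ 2 + 4 * ‖v‖ * ‖v'‖ * sin (angle v v' / 2) ^ 2 := by
  have hcos : cos (angle v v') = 1 - 2 * sin (angle v v' / 2) ^ 2 := by
    rw [← cos_two_mul_eq_one_sub, mul_div_cancel₀ _ two_ne_zero]
  rw [norm_sub_sq_real, ← cos_angle_mul_norm_mul_norm, hcos]
  ring

theorem norm_sub_le_norm_mul_two_sin_half_angle_add (v v' : V) :
    ‖v - v'‖ ≤ ‖v‖ * (2 * sin (angle v v' / 2)) + |‖v'‖ - ‖v‖| := by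
  set s := sin (angle v v' / 2)
  have hs₀ : 0 ≤ s := sin_nonneg_of_nonneg_of_le_pi (by linarith [angle_nonneg v v'])
    (by linarith [angle_le_pi v v', pi_pos])
  have hs₁ : s ≤ 1 := sin_le_one _
  -- `‖v‖ ‖v'‖ s² = ‖v‖² s² + ‖v‖ s² (‖v'‖ - ‖v‖)` and `s² ≤ s`
  have hcross : ‖v‖ * ‖v'‖ * s ^ 2 ≤ ‖v‖ ^ 2 * s ^ 2 + ‖v‖ * s * |‖v'‖ - ‖v‖| := by
    have h : ‖v‖ * s ^ 2 * (‖v'‖ - ‖v‖) ≤ ‖v‖ * s * |‖v'‖ - ‖v‖| :=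
      calc _ ≤ ‖v‖ * s ^ 2 * |‖v'‖ - ‖v‖| := by gcongr; exact le_abs_self _
        _ ≤ ‖v‖ * s * |‖v'‖ - ‖v‖| := by gcongr; nlinarith
    nlinarith
  refine le_of_sq_le_sq ?_ (by positivity)
  rw [norm_sub_sq_eq_sq_sub_norm_add_sin_sq_half_angle, add_sq, sq_abs]
  nlinarith [norm_nonneg v, abs_nonneg (‖v'‖ - ‖v‖)]

theorem norm_sub_le_of_angle_le {v v' : V} {θ : ℝ} (hθ : θ ≤ π) (hang : angle v v' ≤ θ) :
    ‖v - v'‖ ≤ ‖v‖ * (2 * sin (θ / 2)) + |‖v'‖ - ‖v‖| := by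
  have hsin : sin (angle v v' / 2) ≤ sin (θ / 2) :=
    sin_le_sin_of_le_of_le_pi_div_two (by linarith [angle_nonneg v v', pi_pos])
      (by linarith) (by linarith)
  grw [norm_sub_le_norm_mul_two_sin_half_angle_add, hsin]

end Edge

theorem dist_le_mul_of_norm_sub_sub_le {G : Type*} [SeminormedAddCommGroup G]
    {q q' : ℕ → G} (h0 : q' 0 = q 0) {k : ℕ} {δ : ℝ}
    (hstep : ∀ i < k, ‖(q (i + 1) - q i) - (q' (i + 1) - q' i)‖ ≤ δ) :
    dist (q k) (q' k) ≤ k * δ := by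
  have htelescope : q k - q' k = ∑ i ∈ Finset.range k,
      ((q (i + 1) - q i) - (q' (i + 1) - q' i)) := by
    rw [Finset.sum_sub_distrib, Finset.sum_range_sub, Finset.sum_range_sub, h0]
    abel
  rw [dist_eq_norm, htelescope]
  calc _ ≤ ∑ i ∈ Finset.range k, ‖(q (i + 1) - q i) - (q' (i + 1) - q' i)‖ := norm_sum_le _ _
    _ ≤ k * δ := by
      simpa using Finset.sum_le_card_nsmul _ _ _ fun i hi ↦ hstep i (Finset.mem_range.1 hi)

/-- Theorem 1 of the paper (quantitative precision bound): for a simple path of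
`k ≤ E` edges, each of length at most `L`, with edge-length discrepancy at most `μ`
and edge-direction discrepancy at most `θ`, the endpoint displacement is at most
`E²·L·2·sin(θ/2) + E·μ`. -/
theorem precision_bound
    (k E : ℕ) (hkE : k ≤ E) (L μ θ : ℝ) (hL : 0 ≤ L) (hμ : 0 ≤ μ)
    (hθ₀ : 0 < θ) (hθ₁ : θ < Real.pi / 2)
    (q q' : ℕ → EuclideanSpace ℝ (Fin 3)) (h0 : q' 0 = q 0)
    (hlen : ∀ i < k, dist (q i) (q (i + 1)) ≤ L)
    (hdisc : ∀ i < k, |dist (q' i) (q' (i + 1)) - dist (q i) (q (i + 1))| ≤ μ)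
    (hang : ∀ i < k,
      InnerProductGeometry.angle (q (i + 1) - q i) (q' (i + 1) - q' i) ≤ θ) :
    dist (q k) (q' k) ≤ (E : ℝ) ^ 2 * L * 2 * Real.sin (θ / 2) + E * μ := by
  have hsin : 0 ≤ sin (θ / 2) := sin_nonneg_of_nonneg_of_le_pi (by linarith) (by linarith)
  have hedge : ∀ i < k,
      ‖(q (i + 1) - q i) - (q' (i + 1) - q' i)‖ ≤ L * (2 * sin (θ / 2)) + μ := by
    intro i hi
    have hL' := hlen i hi
    have hμ' := hdisc i hi
    simp only [dist_eq_norm_sub'] at hL' hμ'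
    grw [norm_sub_le_of_angle_le (by linarith) (hang i hi), hL', hμ']
  have hE : (E : ℝ) ≤ (E : ℝ) ^ 2 := by exact_mod_cast Nat.le_self_pow two_ne_zero E
  calc dist (q k) (q' k) ≤ k * (L * (2 * sin (θ / 2)) + μ) :=
        dist_le_mul_of_norm_sub_sub_le h0 hedge
    _ ≤ E * (L * (2 * sin (θ / 2)) + μ) := by gcongr
    _ ≤ (E : ℝ) ^ 2 * L * 2 * sin (θ / 2) + E * μ := by
        nlinarith [mul_nonneg hL hsin]
end
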